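/- With notation as above (g = a ⊕ h ⊕ I indecomposable non-simple quadratic of degree δ), the triple (h, [·,·]_h, B_h) is itself a quadratic Lie super algebra of degree δ: [·,·]_h satisfies the Jacobi super identity and B_h is invariant and non-degenerate on h. -/

import Mathlib

/-- The sign `(-1)^{ij}` for `i j : ZMod 2`. -/
def sgn (F : Type*) [Field F] (i j : ZMod 2) : F := (-1) ^ (i * j).val

/-- The orthogonal `J^⊥ = {w : B(j, w) = 0 for all j ∈ J}` of a subspace with
respect to a bilinear form `B`. -/
def orth {F V : Type*} [Field F] [AddCommGroup V] [Module F V]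
    (B : V →ₗ[F] V →ₗ[F] F) (J : Submodule F V) : Submodule F V where
  carrier := {w | ∀ j ∈ J, B j w = 0}
  add_mem' := by
    intro w w' hw hw' j hj
    simp [hw j hj, hw' j hj]
  zero_mem' := by
    intro j hj
    simp
  smul_mem' := by
    intro c w hw j hj
    simp [hw j hj]

/-- in the decomposition `g = aa ⊕ hh ⊕ I`, the triple
`(hh, [·,·]_h, B_h)` (with `[u,v]_h` the `hh`-component of `[u,v]` and
`B_h = B|_{hh×hh}`) is a quadratic Lie super algebra of degree `δ`:
`[·,·]_h` is even, super skew-symmetric and satisfies the Jacobi super identity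
on `hh`, and `B_h` is invariant and non-degenerate on `hh`. -/
theorem h_is_quadratic
    (F V : Type*) [Field F] [IsAlgClosed F] [CharZero F]
    [AddCommGroup V] [Module F V] [FiniteDimensional F V]
    (g : ZMod 2 → Submodule F V) (hg : DirectSum.IsInternal g)
    (br : V →ₗ[F] V →ₗ[F] V)
    -- `(g, [·,·])` is a Lie super algebra
    (hbr_even : ∀ i j : ZMod 2, ∀ x y : V, x ∈ g i → y ∈ g j → br x y ∈ g (i + j))
    (hbr_skew : ∀ i j : ZMod 2, ∀ x y : V, x ∈ g i → y ∈ g j →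
      br x y = -(sgn F i j) • br y x)
    (hbr_jac : ∀ i j k : ZMod 2, ∀ x y z : V, x ∈ g i → y ∈ g j → z ∈ g k →
      sgn F i k • br x (br y z) + sgn F j i • br y (br z x)
        + sgn F k j • br z (br x y) = 0)
    -- `B` is an invariant metric of degree `δ`
    (δ : ZMod 2) (B : V →ₗ[F] V →ₗ[F] F)
    (hB_symm : ∀ i j : ZMod 2, ∀ x y : V, x ∈ g i → y ∈ g j →
      B x y = sgn F i j * B y x)
    (hB_inv : ∀ x y z : V, B (br x y) z = B x (br y z))
    (hB_nd : ∀ x : V, (∀ y : V, B x y = 0) → x = 0)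
    (hB_deg : ∀ i j : ZMod 2, ∀ x y : V, x ∈ g i → y ∈ g j → i + j ≠ δ → B x y = 0)
    -- `g` is non-simple of dimension `> 1`
    (hdim : 1 < Module.finrank F V)
    (hns : ∃ J : Submodule F V, (∀ x : V, ∀ v ∈ J, br x v ∈ J) ∧
      J = (J ⊓ g 0) ⊔ (J ⊓ g 1) ∧ J ≠ ⊥ ∧ J ≠ ⊤)
    -- `g` is indecomposable
    (hind : ¬ ∃ J : Submodule F V, (∀ x : V, ∀ v ∈ J, br x v ∈ J) ∧
      J = (J ⊓ g 0) ⊔ (J ⊓ g 1) ∧ J ≠ ⊥ ∧ J ≠ ⊤ ∧ IsCompl J (orth B J))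
    -- `I` is a minimal graded ideal, contained in `I^⊥` and abelian
    (I : Submodule F V)
    (hI_ideal : ∀ x : V, ∀ v ∈ I, br x v ∈ I)
    (hI_graded : I = (I ⊓ g 0) ⊔ (I ⊓ g 1))
    (hI_ne : I ≠ ⊥)
    (hI_min : ∀ J : Submodule F V, (∀ x : V, ∀ v ∈ J, br x v ∈ J) →
      J = (J ⊓ g 0) ⊔ (J ⊓ g 1) → J ≤ I → J = ⊥ ∨ J = I)
    (hI_deg : I ≤ orth B I)
    -- graded complements: `I^⊥ = hh ⊕ I`, `hh^⊥ = aa ⊕ I`, `aa` isotropic,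
    -- `g = aa ⊕ hh ⊕ I`, and `[I, I^⊥] = 0`
    (hh aa : Submodule F V)
    (hhh_graded : hh = (hh ⊓ g 0) ⊔ (hh ⊓ g 1))
    (haa_graded : aa = (aa ⊓ g 0) ⊔ (aa ⊓ g 1))
    (hIperp : hh ⊔ I = orth B I)
    (hhhperp : aa ⊔ I = orth B hh)
    (haa_iso : ∀ x ∈ aa, ∀ y ∈ aa, B x y = 0)
    (hdisj1 : Disjoint hh I)
    (hdisj2 : Disjoint aa (hh ⊔ I))
    (hsum : aa ⊔ (hh ⊔ I) = ⊤)
    (hcentral : ∀ α ∈ I, ∀ w ∈ hh ⊔ I, br α w = 0)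
    -- components of the bracket with respect to `g = aa ⊕ hh ⊕ I`
    (bra lam mu rho tau brh gam : V →ₗ[F] V →ₗ[F] V)
    (hcomp_a : ∀ x ∈ aa, ∀ y ∈ aa, br x y = bra x y + lam x y + mu x y ∧
      bra x y ∈ aa ∧ lam x y ∈ hh ∧ mu x y ∈ I)
    (hcomp_ah : ∀ x ∈ aa, ∀ u ∈ hh, br x u = rho x u + tau x u ∧
      rho x u ∈ hh ∧ tau x u ∈ I)
    (hcomp_h : ∀ u ∈ hh, ∀ v ∈ hh, br u v = brh u v + gam u v ∧
      brh u v ∈ hh ∧ gam u v ∈ I)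
    (hcomp_aI : ∀ x ∈ aa, ∀ α ∈ I, br x α ∈ I)
    -- `B(hh, aa) = 0` and `B(hh, I) = 0`
    (hB_ha : ∀ u ∈ hh, ∀ x ∈ aa, B u x = 0)
    (hB_hI : ∀ u ∈ hh, ∀ α ∈ I, B u α = 0) :
    (∀ i j : ZMod 2, ∀ u v : V, u ∈ hh → u ∈ g i → v ∈ hh → v ∈ g j →
      brh u v ∈ g (i + j)) ∧
    (∀ i j : ZMod 2, ∀ u v : V, u ∈ hh → u ∈ g i → v ∈ hh → v ∈ g j →
      brh u v = -(sgn F i j) • brh v u) ∧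
    (∀ i j k : ZMod 2, ∀ u v w : V, u ∈ hh → u ∈ g i → v ∈ hh → v ∈ g j →
      w ∈ hh → w ∈ g k →
      sgn F i k • brh u (brh v w) + sgn F j i • brh v (brh w u)
        + sgn F k j • brh w (brh u v) = 0) ∧
    (∀ u ∈ hh, ∀ v ∈ hh, ∀ w ∈ hh, B (brh u v) w = B u (brh v w)) ∧
    (∀ u ∈ hh, (∀ v ∈ hh, B u v = 0) → u = 0) := by
  classical
  have hzmod : ∀ m : ZMod 2, m = 0 ∨ m = 1 := by decide
  have hg01 : Disjoint (g 0) (g 1) :=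
    hg.submodule_iSupIndep.pairwiseDisjoint (by decide)
  have hsplit : ∀ p q : V, p ∈ hh → q ∈ I → p + q = 0 → p = 0 ∧ q = 0 := by
    intro p q hp hq hpq
    have hpI : p ∈ I := by
      have h : p = -q := eq_neg_of_add_eq_zero_left hpq
      rw [h]; exact I.neg_mem hq
    have hp0 : p = 0 := (Submodule.disjoint_def.mp hdisj1) p hp hpI
    refine ⟨hp0, ?_⟩
    rw [hp0, zero_add] at hpq; exact hpq
  have hdec : ∀ (M : Submodule F V), M = (M ⊓ g 0) ⊔ (M ⊓ g 1) → ∀ w ∈ M,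
      ∃ w0 w1, w0 ∈ M ∧ w0 ∈ g 0 ∧ w1 ∈ M ∧ w1 ∈ g 1 ∧ w = w0 + w1 := by
    intro M hM w hw
    rw [hM] at hw
    rcases Submodule.mem_sup.mp hw with ⟨w0, h0, w1, h1, hsum'⟩
    exact ⟨w0, w1, h0.1, h0.2, h1.1, h1.2, hsum'.symm⟩
  have key_grade : ∀ (k : ZMod 2) (p q : V), p ∈ hh → q ∈ I → p + q ∈ g k → p ∈ g k := by
    intro k p q hp hq hpq
    obtain ⟨p0, p1, hp0h, hp0g, hp1h, hp1g, rfl⟩ := hdec hh hhh_graded p hp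
    obtain ⟨q0, q1, hq0I, hq0g, hq1I, hq1g, rfl⟩ := hdec I hI_graded q hq
    rcases hzmod k with rfl | rfl
    · have h1mem : p1 + q1 ∈ g 1 := (g 1).add_mem hp1g hq1g
      have h0mem : p1 + q1 ∈ g 0 := by
        have h : p1 + q1 = (p0 + p1 + (q0 + q1)) - (p0 + q0) := by abel
        rw [h]
        exact (g 0).sub_mem hpq ((g 0).add_mem hp0g hq0g)
      have hz : p1 + q1 = 0 := (Submodule.disjoint_def.mp hg01) _ h0mem h1mem
      have h := (hsplit p1 q1 hp1h hq1I hz).1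
      rw [h, add_zero]
      exact hp0g
    · have h0mem : p0 + q0 ∈ g 0 := (g 0).add_mem hp0g hq0g
      have h1mem : p0 + q0 ∈ g 1 := by
        have h : p0 + q0 = (p0 + p1 + (q0 + q1)) - (p1 + q1) := by abel
        rw [h]
        exact (g 1).sub_mem hpq ((g 1).add_mem hp1g hq1g)
      have hz : p0 + q0 = 0 := (Submodule.disjoint_def.mp hg01) _ h0mem h1mem
      have h := (hsplit p0 q0 hp0h hq0I hz).1
      rw [h, zero_add]
      exact hp1g
  have hbr_hI : ∀ u ∈ hh, ∀ α ∈ I, br u α = 0 := by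
    intro u hu α hα
    obtain ⟨u0, u1, hu0h, hu0g, hu1h, hu1g, rfl⟩ := hdec hh hhh_graded u hu
    obtain ⟨a0, a1, ha0I, ha0g, ha1I, ha1g, rfl⟩ := hdec I hI_graded α hα
    have z : ∀ (i j : ZMod 2) (x y : V), x ∈ hh → x ∈ g i → y ∈ I → y ∈ g j →
        br x y = 0 := by
      intro i j x y hx hxg hy hyg
      rw [hbr_skew i j x y hxg hyg, hcentral y hy x (Submodule.mem_sup_left hx),
        smul_zero]
    simp only [map_add, LinearMap.add_apply,
      z 0 0 u0 a0 hu0h hu0g ha0I ha0g, z 0 1 u0 a1 hu0h hu0g ha1I ha1g,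
      z 1 0 u1 a0 hu1h hu1g ha0I ha0g, z 1 1 u1 a1 hu1h hu1g ha1I ha1g, add_zero]
  have hB_Ih : ∀ α ∈ I, ∀ v ∈ hh, B α v = 0 := by
    intro α hα v hv
    obtain ⟨a0, a1, ha0I, ha0g, ha1I, ha1g, rfl⟩ := hdec I hI_graded α hα
    obtain ⟨v0, v1, hv0h, hv0g, hv1h, hv1g, rfl⟩ := hdec hh hhh_graded v hv
    have z : ∀ (i j : ZMod 2) (x y : V), x ∈ I → x ∈ g i → y ∈ hh → y ∈ g j →
        B x y = 0 := by
      intro i j x y hx hxg hy hyg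
      rw [hB_symm i j x y hxg hyg, hB_hI y hy x hx, mul_zero]
    simp only [map_add, LinearMap.add_apply,
      z 0 0 a0 v0 ha0I ha0g hv0h hv0g, z 0 1 a0 v1 ha0I ha0g hv1h hv1g,
      z 1 0 a1 v0 ha1I ha1g hv0h hv0g, z 1 1 a1 v1 ha1I ha1g hv1h hv1g, add_zero]
  refine ⟨?_, ?_, ?_, ?_, ?_⟩
  · intro i j u v hu hgu hv hgv
    obtain ⟨heq, hbh, hgI⟩ := hcomp_h u hu v hv
    refine key_grade (i + j) _ _ hbh hgI ?_
    rw [← heq]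
    exact hbr_even i j u v hgu hgv
  · intro i j u v hu hgu hv hgv
    obtain ⟨huv, huvh, huvI⟩ := hcomp_h u hu v hv
    obtain ⟨hvu, hvuh, hvuI⟩ := hcomp_h v hv u hu
    have hs := hbr_skew i j u v hgu hgv
    rw [huv, hvu] at hs
    have hz : (brh u v + sgn F i j • brh v u) + (gam u v + sgn F i j • gam v u)
        = 0 := by
      have h1 : (brh u v + sgn F i j • brh v u) + (gam u v + sgn F i j • gam v u)
          = (brh u v + gam u v) + sgn F i j • (brh v u + gam v u) := by
        rw [smul_add]; abel
      rw [h1, hs, neg_smul, neg_add_cancel]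
    have h := (hsplit _ _ (hh.add_mem huvh (hh.smul_mem _ hvuh))
      (I.add_mem huvI (I.smul_mem _ hvuI)) hz).1
    rw [neg_smul]
    exact eq_neg_of_add_eq_zero_left h
  · intro i j k u v w hu hgu hv hgv hw hgw
    obtain ⟨huv, huvh, huvI⟩ := hcomp_h u hu v hv
    obtain ⟨hvw, hvwh, hvwI⟩ := hcomp_h v hv w hw
    obtain ⟨hwu, hwuh, hwuI⟩ := hcomp_h w hw u hu
    have e1 : br u (br v w) = brh u (brh v w) + gam u (brh v w) := by
      rw [hvw, map_add, hbr_hI u hu _ hvwI, add_zero]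
      exact (hcomp_h u hu _ hvwh).1
    have e2 : br v (br w u) = brh v (brh w u) + gam v (brh w u) := by
      rw [hwu, map_add, hbr_hI v hv _ hwuI, add_zero]
      exact (hcomp_h v hv _ hwuh).1
    have e3 : br w (br u v) = brh w (brh u v) + gam w (brh u v) := by
      rw [huv, map_add, hbr_hI w hw _ huvI, add_zero]
      exact (hcomp_h w hw _ huvh).1
    have hj := hbr_jac i j k u v w hgu hgv hgw
    rw [e1, e2, e3, smul_add, smul_add, smul_add] at hj
    have hz : (sgn F i k • brh u (brh v w) + sgn F j i • brh v (brh w u)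
          + sgn F k j • brh w (brh u v))
        + (sgn F i k • gam u (brh v w) + sgn F j i • gam v (brh w u)
          + sgn F k j • gam w (brh u v)) = 0 := by
      rw [← hj]; abel
    exact (hsplit _ _
      (hh.add_mem (hh.add_mem (hh.smul_mem _ (hcomp_h u hu _ hvwh).2.1)
        (hh.smul_mem _ (hcomp_h v hv _ hwuh).2.1))
        (hh.smul_mem _ (hcomp_h w hw _ huvh).2.1))
      (I.add_mem (I.add_mem (I.smul_mem _ (hcomp_h u hu _ hvwh).2.2)
        (I.smul_mem _ (hcomp_h v hv _ hwuh).2.2))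
        (I.smul_mem _ (hcomp_h w hw _ huvh).2.2)) hz).1
  · intro u hu v hv w hw
    obtain ⟨huv, huvh, huvI⟩ := hcomp_h u hu v hv
    obtain ⟨hvw, hvwh, hvwI⟩ := hcomp_h v hv w hw
    have h := hB_inv u v w
    rw [huv, hvw] at h
    simp only [map_add, LinearMap.add_apply, hB_Ih _ huvI w hw,
      hB_hI u hu _ hvwI, add_zero] at h
    exact h
  · intro u hu hB0
    refine hB_nd u ?_
    intro y
    have hy : y ∈ aa ⊔ (hh ⊔ I) := by rw [hsum]; exact Submodule.mem_top
    rcases Submodule.mem_sup.mp hy with ⟨x, hx, w, hw, rfl⟩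
    rcases Submodule.mem_sup.mp hw with ⟨v, hv, α, hα, rfl⟩
    simp only [map_add, hB_ha u hu x hx, hB0 v hv, hB_hI u hu α hα, add_zero,
      zero_add]
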